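/- arXiv:1504.07583 — 9 statements merged into one kernel-verified Lean document; each statement's English description precedes it below -/
import Mathlib

section
/- Let H be a real inner product space, and let s₀, s, X* ∈ H satisfy ‖s₀‖ = ‖s‖ and ⟨X*, s₀ − s⟩ ≥ 0. Then for every t ∈ [0,1], the point X_t = s₀ + t·(X* − s₀) satisfies ‖X_t − s‖² − ‖X_t − s₀‖² ≥ 2(1 − t)·(‖s₀‖² − ⟨s₀, s⟩) ≥ 0; in particular ‖X_t − s₀‖ ≤ ‖X_t − s‖. -/
/-!
Since `‖s₀‖ = ‖s‖`, the difference `‖x - s‖² - ‖x - s₀‖²` equals `2⟪x, s₀ - s⟫`, which is affine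
in `x`. At `x = s₀` it is `2(‖s₀‖² - ⟪s₀, s⟫) ≥ 0` by Cauchy–Schwarz, and at `x = X*` it is
`2⟪X*, s₀ - s⟫ ≥ 0` by hypothesis, so along the segment it is the convex combination
`2t⟪X*, s₀ - s⟫ + 2(1 - t)(‖s₀‖² - ⟪s₀, s⟫)`.
-/

open scoped InnerProductSpace

section

variable {H : Type*} [NormedAddCommGroup H] [InnerProductSpace ℝ H]

theorem norm_sub_sq_sub_norm_sub_sq_real (x a b : H) :
    ‖x - b‖ ^ 2 - ‖x - a‖ ^ 2 = 2 * ⟪x, a - b⟫_ℝ + ‖b‖ ^ 2 - ‖a‖ ^ 2 := by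
  rw [norm_sub_sq_real, norm_sub_sq_real, inner_sub_right]
  ring

theorem real_inner_le_norm_sq_of_norm_le {a b : H} (h : ‖b‖ ≤ ‖a‖) : ⟪a, b⟫_ℝ ≤ ‖a‖ ^ 2 :=
  calc ⟪a, b⟫_ℝ ≤ ‖a‖ * ‖b‖ := real_inner_le_norm a b
    _ ≤ ‖a‖ * ‖a‖ := by gcongr
    _ = ‖a‖ ^ 2 := (sq _).symm

theorem real_inner_lineMap_left (a b v : H) (t : ℝ) :
    ⟪a + t • (b - a), v⟫_ℝ = (1 - t) * ⟪a, v⟫_ℝ + t * ⟪b, v⟫_ℝ := by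
  rw [inner_add_left, real_inner_smul_left, inner_sub_left]
  ring

end

/-- Along the segment from `s₀` towards `X*`, every point is at least as close to `s₀`
as to any other point `s` of the same norm with `⟪X*, s₀ - s⟫ ≥ 0`. -/
theorem stmt0 {H : Type*} [NormedAddCommGroup H] [InnerProductSpace ℝ H]
    (s₀ s Xstar : H) (hnorm : ‖s₀‖ = ‖s‖) (hip : 0 ≤ ⟪Xstar, s₀ - s⟫_ℝ) :
    ∀ t : ℝ, t ∈ Set.Icc (0 : ℝ) 1 →
      ‖(s₀ + t • (Xstar - s₀)) - s‖ ^ 2 - ‖(s₀ + t • (Xstar - s₀)) - s₀‖ ^ 2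
          ≥ 2 * (1 - t) * (‖s₀‖ ^ 2 - ⟪s₀, s⟫_ℝ)
        ∧ 2 * (1 - t) * (‖s₀‖ ^ 2 - ⟪s₀, s⟫_ℝ) ≥ 0
        ∧ ‖(s₀ + t • (Xstar - s₀)) - s₀‖ ≤ ‖(s₀ + t • (Xstar - s₀)) - s‖ := by
  rintro t ⟨ht0, ht1⟩
  set x := s₀ + t • (Xstar - s₀)
  have hgap : ⟪s₀, s⟫_ℝ ≤ ‖s₀‖ ^ 2 := real_inner_le_norm_sq_of_norm_le hnorm.ge
  have hdiff : ‖x - s‖ ^ 2 - ‖x - s₀‖ ^ 2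
      = 2 * t * ⟪Xstar, s₀ - s⟫_ℝ + 2 * (1 - t) * (‖s₀‖ ^ 2 - ⟪s₀, s⟫_ℝ) := by
    rw [norm_sub_sq_sub_norm_sub_sq_real, real_inner_lineMap_left, inner_sub_right,
      real_inner_self_eq_norm_sq, hnorm]
    ring
  have hlower : ‖x - s‖ ^ 2 - ‖x - s₀‖ ^ 2 ≥ 2 * (1 - t) * (‖s₀‖ ^ 2 - ⟪s₀, s⟫_ℝ) := by
    rw [hdiff]
    exact le_add_of_nonneg_left (by positivity)
  have hnonneg : 2 * (1 - t) * (‖s₀‖ ^ 2 - ⟪s₀, s⟫_ℝ) ≥ 0 :=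
    mul_nonneg (mul_nonneg zero_le_two (sub_nonneg.2 ht1)) (sub_nonneg.2 hgap)
  refine ⟨hlower, hnonneg, ?_⟩
  exact (pow_le_pow_iff_left₀ (norm_nonneg _) (norm_nonneg _) two_ne_zero).mp (by linarith)
end

section
/- Let σ₀ be a permutation of {1,…,N} and set s₀ = A∘σ₀ ∈ S. Let Y* ∈ H and let σ* be a permutation minimizing σ ↦ ‖Y*∘σ − s₀‖ over all permutations σ ∈ S_N; set X* = Y*∘σ*. Then for every t ∈ [0,1], the point X_t = s₀ + t·(X* − s₀) has s₀ as a nearest point in S: for every permutation σ ∈ S_N, ‖X_t − s₀‖ ≤ ‖X_t − A∘σ‖. -/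
/-!
Relabelling by a permutation is an isometry of `H`, so `dist (Y*∘σ*) (A∘σ)` equals
`dist (Y*∘σ*σ⁻¹σ₀) (A∘σ₀)`; minimality of `σ*` therefore makes `s₀` a nearest point of `S`
to `X*`. Nearest points persist along segments in any metric space: if `y` lies between `s₀`
and `X*`, a point of `S` closer to `y` than `s₀` would, by the triangle inequality through `y`,
be closer to `X*` than `s₀`.
-/

/-- The phase space `H = (ℝ^d)^N` with norm `‖X‖² = ∑ₐ |X(a)|²`. -/
abbrev Hsp (N d : ℕ) := PiLp 2 (fun _ : Fin N => EuclideanSpace ℝ (Fin d))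

/-- The inclusion of plain maps `{1,…,N} → ℝ^d` into `H`. -/
def toH {N d : ℕ} (X : Fin N → EuclideanSpace ℝ (Fin d)) : Hsp N d := WithLp.toLp 2 X

/-- Composition `X ∘ σ` of an element of `H` with a permutation. -/
def permComp {N d : ℕ} (X : Hsp N d) (σ : Equiv.Perm (Fin N)) : Hsp N d :=
  WithLp.toLp 2 (fun a => X (σ a))

theorem dist_le_dist_of_dist_add_dist_eq {α : Type*} [PseudoMetricSpace α] {p x y q : α}
    (hy : dist p y + dist y x = dist p x) (hq : dist x p ≤ dist x q) :
    dist y p ≤ dist y q := by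
  linarith [dist_triangle x y q, dist_comm x y, dist_comm x p, dist_comm p y]

theorem permComp_eq_piLpCongrLeft {N d : ℕ} (X : Hsp N d) (τ : Equiv.Perm (Fin N)) :
    permComp X τ = LinearIsometryEquiv.piLpCongrLeft 2 ℝ _ τ.symm X := by
  ext a
  simp [permComp, LinearIsometryEquiv.piLpCongrLeft_apply, Equiv.piCongrLeft']

theorem dist_permComp {N d : ℕ} (X Y : Hsp N d) (τ : Equiv.Perm (Fin N)) :
    dist (permComp X τ) (permComp Y τ) = dist X Y := by
  simp only [permComp_eq_piLpCongrLeft, LinearIsometryEquiv.dist_map]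

theorem permComp_permComp {N d : ℕ} (X : Hsp N d) (σ τ : Equiv.Perm (Fin N)) :
    permComp (permComp X σ) τ = permComp X (σ * τ) := rfl

theorem dist_permComp_le_of_minimizing {N d : ℕ} (X P : Hsp N d) (σ₀ σstar : Equiv.Perm (Fin N))
    (hmin : ∀ σ, dist (permComp X σstar) (permComp P σ₀) ≤ dist (permComp X σ) (permComp P σ₀))
    (σ : Equiv.Perm (Fin N)) :
    dist (permComp X σstar) (permComp P σ₀) ≤ dist (permComp X σstar) (permComp P σ) := by
  calc dist (permComp X σstar) (permComp P σ₀)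
      ≤ dist (permComp X (σstar * (σ⁻¹ * σ₀))) (permComp P σ₀) := hmin _
    _ = dist (permComp X σstar) (permComp P σ) := by
      rw [← dist_permComp (permComp X σstar) _ (σ⁻¹ * σ₀), permComp_permComp, permComp_permComp,
        mul_inv_cancel_left]

theorem stmt2_general {N d : ℕ} (A : Fin N → EuclideanSpace ℝ (Fin d))
    (σ₀ σstar : Equiv.Perm (Fin N)) (Ystar : Hsp N d)
    (hmin : ∀ σ : Equiv.Perm (Fin N),
      ‖permComp Ystar σstar - permComp (toH A) σ₀‖
        ≤ ‖permComp Ystar σ - permComp (toH A) σ₀‖)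
    (t : ℝ) (ht : t ∈ Set.Icc (0 : ℝ) 1) (σ : Equiv.Perm (Fin N)) :
    ‖(permComp (toH A) σ₀ + t • (permComp Ystar σstar - permComp (toH A) σ₀))
        - permComp (toH A) σ₀‖
      ≤ ‖(permComp (toH A) σ₀ + t • (permComp Ystar σstar - permComp (toH A) σ₀))
        - permComp (toH A) σ‖ := by
  simp only [← dist_eq_norm] at hmin ⊢
  have hseg : permComp (toH A) σ₀ + t • (permComp Ystar σstar - permComp (toH A) σ₀) ∈
      segment ℝ (permComp (toH A) σ₀) (permComp Ystar σstar) := by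
    rw [segment_eq_image']
    exact ⟨t, ht, rfl⟩
  exact dist_le_dist_of_dist_add_dist_eq (dist_add_dist_of_mem_segment hseg)
    (dist_permComp_le_of_minimizing _ _ _ _ hmin σ)

/-- Along the geodesic from `s₀ = A∘σ₀` to the optimally permuted endpoint
`X* = Y*∘σ*`, the point `s₀` remains a closest point of the set
`S = {A∘σ : σ ∈ S_N}`. -/
theorem stmt2 {N d : ℕ} (A : Fin N → EuclideanSpace ℝ (Fin d))
    (hA : Function.Injective A)
    (σ₀ σstar : Equiv.Perm (Fin N)) (Ystar : Hsp N d)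
    (hmin : ∀ σ : Equiv.Perm (Fin N),
      ‖permComp Ystar σstar - permComp (toH A) σ₀‖
        ≤ ‖permComp Ystar σ - permComp (toH A) σ₀‖)
    (t : ℝ) (ht : t ∈ Set.Icc (0 : ℝ) 1) (σ : Equiv.Perm (Fin N)) :
    ‖(permComp (toH A) σ₀ + t • (permComp Ystar σstar - permComp (toH A) σ₀))
        - permComp (toH A) σ₀‖
      ≤ ‖(permComp (toH A) σ₀ + t • (permComp Ystar σstar - permComp (toH A) σ₀))
        - permComp (toH A) σ‖ :=
  stmt2_general A σ₀ σstar Ystar hmin t ht σ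
end

section
/- Let E be a finite-dimensional real inner product space and S ⊆ E a nonempty finite set. Define Φ : E → ℝ by Φ(Y) = (1/2)·dist(Y,S)² = min_{s∈S} ‖Y − s‖²/2. If Φ is differentiable at a point Y ∈ E, then ‖∇Φ(Y)‖² = 2·Φ(Y). -/
/-!
If `s ∈ S` is a nearest point to `Y`, then `Φ ≤ ½‖· - s‖²` everywhere, with equality at `Y`.
Two functions that touch from one side at a point where both are differentiable have the same
derivative there, so `∇Φ(Y) = Y - s` and `‖∇Φ(Y)‖² = ‖Y - s‖² = 2Φ(Y)`.
-/

open Filter Topology Metric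

theorem HasFDerivAt.eq_of_eventuallyLE_of_eq {F : Type*} [NormedAddCommGroup F]
    [NormedSpace ℝ F] {f g : F → ℝ} {f' g' : F →L[ℝ] ℝ} {x : F}
    (hf : HasFDerivAt f f' x) (hg : HasFDerivAt g g' x) (hle : f ≤ᶠ[𝓝 x] g)
    (heq : f x = g x) : f' = g' := by
  have hmin : IsLocalMin (fun z => g z - f z) x :=
    hle.mono fun z hz => by simpa [heq] using hz
  exact (sub_eq_zero.mp (hmin.hasFDerivAt_eq_zero (hg.sub hf))).symm

section InnerProductSpace

variable {E : Type*} [NormedAddCommGroup E] [InnerProductSpace ℝ E] [CompleteSpace E]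

theorem hasGradientAt_half_norm_sub_sq (s y : E) :
    HasGradientAt (fun z => ‖z - s‖ ^ 2 / 2) (y - s) y := by
  rw [hasGradientAt_iff_hasFDerivAt]
  have h := ((hasFDerivAt_id y).sub_const s).norm_sq.mul_const (2⁻¹ : ℝ)
  simp only [id, ← div_eq_mul_inv] at h
  refine h.congr_fderiv ?_
  ext v
  simp

theorem hasGradientAt_half_infDist_sq {S : Set E} {s y : E} (hs : s ∈ S)
    (hy : infDist y S = dist y s)
    (hdiff : DifferentiableAt ℝ (fun z => infDist z S ^ 2 / 2) y) :
    HasGradientAt (fun z => infDist z S ^ 2 / 2) (y - s) y := by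
  have hle : (fun z => infDist z S ^ 2 / 2) ≤ fun z => ‖z - s‖ ^ 2 / 2 := fun z => by
    dsimp only
    rw [← dist_eq_norm]
    gcongr
    · exact infDist_nonneg
    · exact infDist_le_dist_of_mem hs
  have htouch : infDist y S ^ 2 / 2 = ‖y - s‖ ^ 2 / 2 := by rw [hy, dist_eq_norm]
  have hgrad := hasGradientAt_half_norm_sub_sq s y
  rw [hasGradientAt_iff_hasFDerivAt] at hgrad ⊢
  have hΦ := hdiff.hasFDerivAt
  rwa [hΦ.eq_of_eventuallyLE_of_eq hgrad (.of_forall hle) htouch] at hΦ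

end InnerProductSpace

/-- The eikonal identity `‖∇Φ‖² = 2Φ` for `Φ = ½ dist(·,S)²`, the half squared
distance function to a nonempty finite set `S`, at every point of differentiability. -/
theorem stmt4 {E : Type*} [NormedAddCommGroup E] [InnerProductSpace ℝ E]
    [FiniteDimensional ℝ E]
    (S : Finset E) (hS : S.Nonempty) (Y : E)
    (hdiff : DifferentiableAt ℝ (fun Z => Metric.infDist Z (S : Set E) ^ 2 / 2) Y) :
    ‖gradient (fun Z => Metric.infDist Z (S : Set E) ^ 2 / 2) Y‖ ^ 2
      = 2 * (Metric.infDist Y (S : Set E) ^ 2 / 2) := by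
  obtain ⟨s, hs, hYs⟩ :=
    S.finite_toSet.isCompact.exists_infDist_eq_dist (Finset.coe_nonempty.mpr hS) Y
  rw [(hasGradientAt_half_infDist_sq hs hYs hdiff).gradient, hYs, dist_eq_norm]
  ring
end

section
/- Let E be a finite-dimensional real inner product space and S ⊆ E a nonempty finite set. Define Π : E → ℝ by Π(Y) = max_{s∈S} (⟨Y,s⟩ − ‖s‖²/2). If Π is differentiable at a point X ∈ E, then ∇Π(X) ∈ S and ∇Π(X) is a nearest point of X in S, i.e. ‖X − ∇Π(X)‖ ≤ ‖X − s‖ for every s ∈ S. -/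
open scoped InnerProductSpace
open Filter Topology

/-
`Π` is the maximum of the affine functions `ℓ_s(Y) = ⟪Y, s⟫ - ‖s‖²/2`. If `s₀` realises
the maximum at `X`, then `ℓ_{s₀} ≤ Π` with equality at `X`, so `Π - ℓ_{s₀}` has a minimum at `X`,
and differentiability of `Π` forces `∇Π(X) = ∇ℓ_{s₀} = s₀`. Since
`‖X - s‖² = ‖X‖² - 2 ℓ_s(X)`, maximising `ℓ_s(X)` over `S` is the same as minimising `‖X - s‖`.
-/

theorem HasFDerivAt.eq_of_eventually_le_of_eq {E : Type*} [NormedAddCommGroup E]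
    [NormedSpace ℝ E] {f g : E → ℝ} {f' g' : E →L[ℝ] ℝ} {x : E}
    (hf : HasFDerivAt f f' x) (hg : HasFDerivAt g g' x) (hle : g ≤ᶠ[𝓝 x] f) (heq : f x = g x) :
    f' = g' := by
  have hmin : IsLocalMin (fun y => f y - g y) x := by
    filter_upwards [hle] with y hy
    rw [heq, sub_self]
    exact sub_nonneg.mpr hy
  exact sub_eq_zero.mp (hmin.hasFDerivAt_eq_zero (hf.sub hg))

section InnerProductSpace

variable {E : Type*} [NormedAddCommGroup E] [InnerProductSpace ℝ E]

theorem HasGradientAt.eq_of_eventually_le_of_eq [CompleteSpace E] {f g : E → ℝ} {f' g' x : E}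
    (hf : HasGradientAt f f' x) (hg : HasGradientAt g g' x) (hle : g ≤ᶠ[𝓝 x] f)
    (heq : f x = g x) : f' = g' :=
  (InnerProductSpace.toDual ℝ E).injective
    (hf.hasFDerivAt.eq_of_eventually_le_of_eq hg.hasFDerivAt hle heq)

theorem hasGradientAt_inner_left_sub_const [CompleteSpace E] (s : E) (c : ℝ) (x : E) :
    HasGradientAt (fun y : E => ⟪y, s⟫_ℝ - c) s x := by
  rw [hasGradientAt_iff_hasFDerivAt]
  refine (((InnerProductSpace.toDual ℝ E s).hasFDerivAt).sub_const c).congr_of_eventuallyEq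
    (Eventually.of_forall fun y => ?_)
  simp only [InnerProductSpace.toDual_apply_apply, real_inner_comm]

theorem norm_sub_le_norm_sub_of_inner_sub_half_sq_le {x s t : E}
    (h : ⟪x, s⟫_ℝ - ‖s‖ ^ 2 / 2 ≤ ⟪x, t⟫_ℝ - ‖t‖ ^ 2 / 2) : ‖x - t‖ ≤ ‖x - s‖ := by
  rw [← sq_le_sq₀ (norm_nonneg _) (norm_nonneg _), norm_sub_sq_real, norm_sub_sq_real]
  linarith

end InnerProductSpace

/-- At a point of differentiability of the convex potential
`Π(Y) = max_{s∈S} (⟪Y,s⟫ − ‖s‖²/2)`, the gradient `∇Π(X)` belongs to `S` and is a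
nearest point of `X` in `S`: the identification `π(X) = ∇Π(X)`. -/
theorem stmt7 {E : Type*} [NormedAddCommGroup E] [InnerProductSpace ℝ E]
    [FiniteDimensional ℝ E]
    (S : Finset E) (hS : S.Nonempty) (X : E)
    (hdiff : DifferentiableAt ℝ (fun Y : E => S.sup' hS fun s => ⟪Y, s⟫_ℝ - ‖s‖ ^ 2 / 2) X) :
    gradient (fun Y : E => S.sup' hS fun s => ⟪Y, s⟫_ℝ - ‖s‖ ^ 2 / 2) X ∈ S
    ∧ ∀ s ∈ S,
        ‖X - gradient (fun Y : E => S.sup' hS fun s => ⟪Y, s⟫_ℝ - ‖s‖ ^ 2 / 2) X‖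
          ≤ ‖X - s‖ := by
  obtain ⟨s₀, hs₀S, hs₀⟩ := S.exists_mem_eq_sup' hS fun s => ⟪X, s⟫_ℝ - ‖s‖ ^ 2 / 2
  have hgrad : gradient (fun Y : E => S.sup' hS fun s => ⟪Y, s⟫_ℝ - ‖s‖ ^ 2 / 2) X = s₀ :=
    hdiff.hasGradientAt.eq_of_eventually_le_of_eq (hasGradientAt_inner_left_sub_const s₀ _ X)
      (Eventually.of_forall fun Y => S.le_sup' (fun s => ⟪Y, s⟫_ℝ - ‖s‖ ^ 2 / 2) hs₀S) hs₀
  refine ⟨hgrad ▸ hs₀S, fun s hs => hgrad ▸ ?_⟩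
  exact norm_sub_le_norm_sub_of_inner_sub_half_sq_le (hs₀ ▸ S.le_sup' (fun s => ⟪X, s⟫_ℝ - ‖s‖ ^ 2 / 2) hs)
end

section
/- Let E be a real Banach space, R ≥ 0, and let X : ℝ → E be twice continuously differentiable with ‖X''(t) − X(t)‖ ≤ R for all t ∈ ℝ. Then for all t ∈ ℝ: ‖X(t)‖ + ‖X'(t)‖ ≤ 2·(‖X(0)‖ + ‖X'(0)‖ + R)·cosh(t). -/
/-! In the `ℓ¹` norm of `E × E`, the phase-space curve `(X, X')` has velocity `(X', X'')` of norm
at most `‖X'‖ + ‖X‖ + R ≤ ‖(X, X')‖ + R`, so Gronwall's inequality bounds `‖X t‖ + ‖X' t‖` by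
`(‖X 0‖ + ‖X' 0‖ + R) eᵗ` for `t ≥ 0`. The curve `t ↦ X (-t)` satisfies the same hypothesis,
which gives the factor `e^|t| ≤ 2 cosh t`. -/

open Real

section

variable {E : Type*} [NormedAddCommGroup E] [NormedSpace ℝ E]

lemma exp_abs_le_two_mul_cosh (t : ℝ) : exp |t| ≤ 2 * cosh t := by
  rw [cosh_eq]
  rcases abs_cases t with ⟨h, -⟩ | ⟨h, -⟩ <;> rw [h] <;> linarith [exp_pos t, exp_pos (-t)]

theorem norm_add_norm_deriv_le_mul_exp {X X' X'' : ℝ → E} {R : ℝ} (hR : 0 ≤ R)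
    (hX : ∀ t, HasDerivAt X (X' t) t) (hX' : ∀ t, HasDerivAt X' (X'' t) t)
    (hbound : ∀ t, ‖X'' t - X t‖ ≤ R) {t : ℝ} (ht : 0 ≤ t) :
    ‖X t‖ + ‖X' t‖ ≤ (‖X 0‖ + ‖X' 0‖ + R) * exp t := by
  let L := (WithLp.prodContinuousLinearEquiv 1 ℝ E E).symm
  have norm_L (a b : E) : ‖L (a, b)‖ = ‖a‖ + ‖b‖ := WithLp.prod_norm_eq_of_L1 _
  have hF (s : ℝ) : HasDerivAt (fun s ↦ L (X s, X' s)) (L (X' s, X'' s)) s :=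
    L.hasFDerivAt.comp_hasDerivAt s ((hX s).prodMk (hX' s))
  have hF_bound (s : ℝ) : ‖L (X' s, X'' s)‖ ≤ 1 * ‖L (X s, X' s)‖ + R := by
    rw [norm_L, norm_L, one_mul]
    linarith [norm_le_norm_sub_add (X'' s) (X s), hbound s]
  have gronwall := norm_le_gronwallBound_of_norm_deriv_right_le
    (fun s _ ↦ (hF s).continuousAt.continuousWithinAt) (fun s _ ↦ (hF s).hasDerivWithinAt)
    (norm_L (X 0) (X' 0)).le (fun s _ ↦ hF_bound s) t ⟨ht, le_rfl⟩
  rw [norm_L, gronwallBound_of_K_ne_0 one_ne_zero] at gronwall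
  simp only [one_mul, sub_zero, div_one] at gronwall
  nlinarith [exp_pos t]

theorem norm_add_norm_deriv_le_mul_exp_abs {X X' X'' : ℝ → E} {R : ℝ} (hR : 0 ≤ R)
    (hX : ∀ t, HasDerivAt X (X' t) t) (hX' : ∀ t, HasDerivAt X' (X'' t) t)
    (hbound : ∀ t, ‖X'' t - X t‖ ≤ R) (t : ℝ) :
    ‖X t‖ + ‖X' t‖ ≤ (‖X 0‖ + ‖X' 0‖ + R) * exp |t| := by
  rcases le_or_gt 0 t with ht | ht
  · rw [abs_of_nonneg ht]
    exact norm_add_norm_deriv_le_mul_exp hR hX hX' hbound ht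
  · have hY (s : ℝ) : HasDerivAt (fun s ↦ X (-s)) (-X' (-s)) s :=
      ((hX (-s)).scomp s (hasDerivAt_neg s)).congr_deriv (by simp)
    have hY' (s : ℝ) : HasDerivAt (fun s ↦ -X' (-s)) (X'' (-s)) s :=
      ((hX' (-s)).scomp s (hasDerivAt_neg s)).neg.congr_deriv (by simp)
    have reversed :=
      norm_add_norm_deriv_le_mul_exp hR hY hY' (fun s ↦ hbound (-s)) (neg_nonneg.2 ht.le)
    simpa [abs_of_neg ht] using reversed

end

theorem stmt11_general {E : Type*} [NormedAddCommGroup E] [NormedSpace ℝ E]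
    (R : ℝ) (hR : 0 ≤ R) (X : ℝ → E) (hX : ContDiff ℝ 2 X)
    (hbound : ∀ t : ℝ, ‖deriv (deriv X) t - X t‖ ≤ R) :
    ∀ t : ℝ, ‖X t‖ + ‖deriv X t‖ ≤ 2 * (‖X 0‖ + ‖deriv X 0‖ + R) * Real.cosh t := by
  have hX' : ContDiff ℝ 1 (deriv X) := (contDiff_succ_iff_deriv.mp hX).2.2
  have hdX (t : ℝ) : HasDerivAt X (deriv X t) t :=
    (hX.differentiable two_ne_zero t).hasDerivAt
  have hdX' (t : ℝ) : HasDerivAt (deriv X) (deriv (deriv X) t) t :=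
    (hX'.differentiable one_ne_zero t).hasDerivAt
  intro t
  calc ‖X t‖ + ‖deriv X t‖ ≤ (‖X 0‖ + ‖deriv X 0‖ + R) * exp |t| :=
        norm_add_norm_deriv_le_mul_exp_abs hR hdX hdX' hbound t
    _ ≤ (‖X 0‖ + ‖deriv X 0‖ + R) * (2 * cosh t) := by
        gcongr
        exact exp_abs_le_two_mul_cosh t
    _ = 2 * (‖X 0‖ + ‖deriv X 0‖ + R) * cosh t := by ring

/-- No blow-up estimate: if the acceleration of a curve deviates from the position
by at most `R` in norm, then the curve grows at most like `cosh t`. -/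
theorem stmt11 {E : Type*} [NormedAddCommGroup E] [NormedSpace ℝ E] [CompleteSpace E]
    (R : ℝ) (hR : 0 ≤ R) (X : ℝ → E) (hX : ContDiff ℝ 2 X)
    (hbound : ∀ t : ℝ, ‖deriv (deriv X) t - X t‖ ≤ R) :
    ∀ t : ℝ, ‖X t‖ + ‖deriv X t‖ ≤ 2 * (‖X 0‖ + ‖deriv X 0‖ + R) * Real.cosh t :=
  stmt11_general R hR X hX hbound
end

section
/- Suppose X : ℝ → H is twice continuously differentiable and for every t ∈ ℝ there exists a permutation σ_t ∈ S_N such that X''(t)(a) = X(t)(a) − A(σ_t(a)) for all a ∈ {1,…,N}. Then for all t ∈ ℝ: ‖X(t)‖ + ‖X'(t)‖ ≤ 2·(‖X(0)‖ + ‖X'(0)‖ + √N·R)·cosh(t), where R = max_a |A(a)|. In particular, solutions of the discrete Monge–Ampère gravitational system never run away to infinity in finite time. -/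
open Real

namespace PiLp

theorem norm_le_sqrt_card_mul {ι : Type*} [Fintype ι] {F : ι → Type*}
    [∀ i, SeminormedAddCommGroup (F i)] (x : PiLp 2 F) {R : ℝ} (hx : ∀ i, ‖x i‖ ≤ R) :
    ‖x‖ ≤ √(Fintype.card ι) * R := by
  rcases isEmpty_or_nonempty ι with _ | ⟨⟨i⟩⟩
  · simp [Subsingleton.elim x 0]
  have hR : 0 ≤ R := (norm_nonneg _).trans (hx i)
  calc ‖x‖ = √(∑ i, ‖x i‖ ^ 2) := norm_eq_of_L2 x
    _ ≤ √(∑ _i : ι, R ^ 2) := by gcongr with j; exact hx j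
    _ = √(Fintype.card ι) * R := by
        rw [Finset.sum_const, Finset.card_univ, nsmul_eq_mul, sqrt_mul (Nat.cast_nonneg _),
          sqrt_sq hR]

end PiLp

section Growth

variable {E : Type*} [NormedAddCommGroup E] [NormedSpace ℝ E] {ε : ℝ}

theorem norm_le_add_mul_exp_of_norm_deriv_le {Z : ℝ → E} (hε : 0 ≤ ε)
    (hZ : Differentiable ℝ Z) (hb : ∀ t, ‖deriv Z t‖ ≤ ‖Z t‖ + ε) {t : ℝ} (ht : 0 ≤ t) :
    ‖Z t‖ ≤ (‖Z 0‖ + ε) * exp t := by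
  have h := norm_le_gronwallBound_of_norm_deriv_right_le hZ.continuous.continuousOn
    (fun x _ => (hZ x).hasDerivAt.hasDerivWithinAt) le_rfl
    (fun x _ => (one_mul ‖Z x‖).symm ▸ hb x) t ⟨ht, le_rfl⟩
  simp only [sub_zero, gronwallBound_of_K_ne_0 one_ne_zero, one_mul, div_one] at h
  nlinarith [exp_pos t]

theorem norm_le_add_mul_exp_abs_of_norm_deriv_le {Z : ℝ → E} (hε : 0 ≤ ε)
    (hZ : Differentiable ℝ Z) (hb : ∀ t, ‖deriv Z t‖ ≤ ‖Z t‖ + ε) (t : ℝ) :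
    ‖Z t‖ ≤ (‖Z 0‖ + ε) * exp |t| := by
  rcases le_or_gt 0 t with ht | ht
  · rw [abs_of_nonneg ht]
    exact norm_le_add_mul_exp_of_norm_deriv_le hε hZ hb ht
  · have hb' : ∀ s, ‖deriv (fun s => Z (-s)) s‖ ≤ ‖Z (-s)‖ + ε := fun s => by
      rw [deriv_comp_neg, norm_neg]
      exact hb (-s)
    simpa [abs_of_neg ht] using
      norm_le_add_mul_exp_of_norm_deriv_le hε (hZ.comp differentiable_neg) hb' (neg_nonneg.2 ht.le)

theorem norm_add_norm_deriv_le_mul_exp_abs_s13 {X : ℝ → E} (hε : 0 ≤ ε) (hX : ContDiff ℝ 2 X)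
    (hb : ∀ t, ‖deriv (deriv X) t‖ ≤ ‖X t‖ + ε) (t : ℝ) :
    ‖X t‖ + ‖deriv X t‖ ≤ (‖X 0‖ + ‖deriv X 0‖ + ε) * exp |t| := by
  let e := (WithLp.prodContinuousLinearEquiv 1 ℝ E E).symm
  have hnorm : ∀ p : E × E, ‖e p‖ = ‖p.1‖ + ‖p.2‖ := fun p => WithLp.prod_norm_eq_of_L1 _
  have hZ : ∀ t, HasDerivAt (fun t => e (X t, deriv X t)) (e (deriv X t, deriv (deriv X) t)) t :=
    fun t => e.hasFDerivAt.comp_hasDerivAt t <|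
      ((hX.differentiable (by norm_num) t).hasDerivAt).prodMk
        (hX.differentiable_deriv_two t).hasDerivAt
  have h := norm_le_add_mul_exp_abs_of_norm_deriv_le hε (fun t => (hZ t).differentiableAt)
    (fun t => by rw [(hZ t).deriv, hnorm, hnorm]; linarith [hb t]) t
  simpa only [hnorm] using h

end Growth

theorem stmt13_general {N d : ℕ} (hN : 0 < N) (A : Fin N → EuclideanSpace ℝ (Fin d))
    (R : ℝ) (hR : R = Finset.univ.sup' ⟨⟨0, hN⟩, Finset.mem_univ _⟩ fun a => ‖A a‖)
    (X : ℝ → Hsp N d) (hX : ContDiff ℝ 2 X)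
    (hsys : ∀ t : ℝ, ∃ σ : Equiv.Perm (Fin N),
      ∀ a : Fin N, deriv (deriv X) t a = X t a - A (σ a)) :
    ∀ t : ℝ,
      ‖X t‖ + ‖deriv X t‖
        ≤ 2 * (‖X 0‖ + ‖deriv X 0‖ + Real.sqrt N * R) * Real.cosh t := by
  have hAR : ∀ a, ‖A a‖ ≤ R := fun a => hR ▸ Finset.le_sup' (fun a => ‖A a‖) (Finset.mem_univ a)
  have hR0 : 0 ≤ R := (norm_nonneg _).trans (hAR ⟨0, hN⟩)
  have hforce : ∀ t, ‖deriv (deriv X) t‖ ≤ ‖X t‖ + √N * R := fun t => by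
    obtain ⟨σ, hσ⟩ := hsys t
    have hsplit : deriv (deriv X) t = X t - WithLp.toLp 2 (fun a => A (σ a)) := PiLp.ext hσ
    rw [hsplit]
    refine (norm_sub_le _ _).trans (add_le_add_right ?_ _)
    simpa using PiLp.norm_le_sqrt_card_mul (WithLp.toLp 2 fun a => A (σ a)) fun a => hAR (σ a)
  intro t
  calc ‖X t‖ + ‖deriv X t‖
      ≤ (‖X 0‖ + ‖deriv X 0‖ + √N * R) * exp |t| :=
        norm_add_norm_deriv_le_mul_exp_abs_s13 (by positivity) hX hforce t
    _ ≤ (‖X 0‖ + ‖deriv X 0‖ + √N * R) * (2 * cosh t) := by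
        gcongr
        rw [cosh_eq]
        linarith [exp_abs_le t]
    _ = 2 * (‖X 0‖ + ‖deriv X 0‖ + √N * R) * cosh t := by ring

/-- Solutions of the discrete Monge–Ampère gravitational system
`X''(t)(a) = X(t)(a) − A(σ_t(a))` never run away to infinity in finite time:
they grow at most like `cosh t`, with `R = maxₐ |A(a)|`. -/
theorem stmt13 {N d : ℕ} (hN : 0 < N) (A : Fin N → EuclideanSpace ℝ (Fin d))
    (hA : Function.Injective A)
    (R : ℝ) (hR : R = Finset.univ.sup' ⟨⟨0, hN⟩, Finset.mem_univ _⟩ fun a => ‖A a‖)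
    (X : ℝ → Hsp N d) (hX : ContDiff ℝ 2 X)
    (hsys : ∀ t : ℝ, ∃ σ : Equiv.Perm (Fin N),
      ∀ a : Fin N, deriv (deriv X) t a = X t a - A (σ a)) :
    ∀ t : ℝ,
      ‖X t‖ + ‖deriv X t‖
        ≤ 2 * (‖X 0‖ + ‖deriv X 0‖ + Real.sqrt N * R) * Real.cosh t :=
  stmt13_general hN A R hR X hX hsys
end

section
/- Let λ be the Lebesgue measure restricted to the unit cube [0,1]^d, and let ρ be a Borel probability measure on ℝ^d with finite second moment that is absolutely continuous with respect to the Lebesgue measure. Suppose ψ₁, ψ₂ : ℝ^d → ℝ are Lipschitz convex functions and T₁, T₂ : ℝ^d → ℝ^d are Borel measurable maps with T_i(y) = ∇ψ_i(y) for ρ-almost every y and with the pushforward of ρ under T_i equal to λ, for i = 1, 2. Then T₁ = T₂ ρ-almost everywhere. -/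
/-!
Let `ψ*` be the Fenchel conjugate of `ψ`. Young's inequality `⟪x, y⟫ ≤ ψ y + ψ* x` is an equality
exactly when `x` is a subgradient of `ψ` at `y`, in particular when `x = ∇ψ y`. Hence if `T₁ = ∇ψ₁`
and `T₂` has the same law as `T₁`, then
`∫ ⟪T₂ y, y⟫ ≤ ∫ (ψ₁ y + ψ₁* (T₂ y)) = ∫ (ψ₁ y + ψ₁* (T₁ y)) = ∫ ⟪T₁ y, y⟫`.
Exchanging the roles of the two maps forces equality, so `T₂ y` is a subgradient of `ψ₁` at `y`
for `ρ`-a.e. `y`, and a subgradient at a point of differentiability is the gradient.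
-/

open MeasureTheory RealInnerProductSpace
open scoped ENNReal

section Gradient

variable {E : Type*} [NormedAddCommGroup E] [InnerProductSpace ℝ E] [CompleteSpace E]
  {ψ : E → ℝ} {g y : E}

theorem HasGradientAt.norm_le_of_lipschitzWith {K : NNReal} (h : HasGradientAt ψ g y)
    (hψ : LipschitzWith K ψ) : ‖g‖ ≤ K := by
  simpa using h.hasFDerivAt.le_of_lipschitz hψ

theorem ConvexOn.add_inner_le_of_hasGradientAt (hψ : ConvexOn ℝ Set.univ ψ)
    (h : HasGradientAt ψ g y) (z : E) : ψ y + ⟪g, z - y⟫ ≤ ψ z := by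
  let ℓ : ℝ →ᵃ[ℝ] E := AffineMap.lineMap y z
  have hℓ : HasFDerivAt ψ (InnerProductSpace.toDual ℝ E g) (ℓ 0) := by
    simpa [ℓ] using h.hasFDerivAt
  have hline : HasDerivAt (ψ ∘ ℓ) ⟪g, z - y⟫ 0 := by
    simpa using hℓ.comp_hasDerivAt (0 : ℝ) AffineMap.hasDerivAt_lineMap
  have := (hψ.comp_affineMap ℓ).le_slope_of_hasDerivAt trivial trivial zero_lt_one hline
  simp only [slope_def_field, Function.comp_apply, AffineMap.lineMap_apply_one,
    AffineMap.lineMap_apply_zero, sub_zero, div_one, ℓ] at this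
  linarith

theorem HasGradientAt.eq_of_forall_add_inner_le {v : E} (h : HasGradientAt ψ g y)
    (hv : ∀ z, ψ y + ⟪v, z - y⟫ ≤ ψ z) : v = g := by
  have hmin : IsLocalMin (fun z => ψ z - ⟪v, z⟫) y :=
    Filter.Eventually.of_forall fun z => by
      have := hv z
      rw [inner_sub_right] at this
      linarith
  have := hmin.hasFDerivAt_eq_zero (h.hasFDerivAt.sub (innerSL ℝ v).hasFDerivAt)
  have hgv := congrArg (fun L => L (g - v)) this
  simp only [sub_apply, InnerProductSpace.toDual_apply_apply,
    innerSL_apply_apply, zero_apply, ← inner_sub_left] at hgv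
  exact (sub_eq_zero.mp (inner_self_eq_zero.mp hgv)).symm

end Gradient

section Conjugate

variable {E : Type*} [NormedAddCommGroup E] [InnerProductSpace ℝ E] {ψ : E → ℝ} {x g y : E}

/-- The Fenchel conjugate shifted by `ψ 0`: `fenchelConj ψ x = ψ* x + ψ 0`. The shift makes every
supremum nonnegative (take `z = 0`), so `ENNReal.ofReal` truncates nothing that matters. -/
noncomputable def fenchelConj (ψ : E → ℝ) (x : E) : ℝ≥0∞ :=
  ⨆ z, ENNReal.ofReal (⟪x, z⟫ - ψ z + ψ 0)

/-- `ψ y + ψ* x - ⟪x, y⟫`, the gap in Young's inequality; junk when `ψ* x = ∞`. -/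
noncomputable def youngDefect (ψ : E → ℝ) (x y : E) : ℝ :=
  (fenchelConj ψ x).toReal - (⟪x, y⟫ - ψ y + ψ 0)

theorem measurable_fenchelConj [MeasurableSpace E] [OpensMeasurableSpace E] (ψ : E → ℝ) :
    Measurable (fenchelConj ψ) :=
  LowerSemicontinuous.measurable <| lowerSemicontinuous_iSup fun _ =>
    (ENNReal.continuous_ofReal.comp
      (((continuous_id.inner continuous_const).sub continuous_const).add
        continuous_const)).lowerSemicontinuous

theorem ofReal_le_fenchelConj (ψ : E → ℝ) (x z : E) :
    ENNReal.ofReal (⟪x, z⟫ - ψ z + ψ 0) ≤ fenchelConj ψ x :=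
  le_iSup (fun z => ENNReal.ofReal (⟪x, z⟫ - ψ z + ψ 0)) z

theorem le_toReal_fenchelConj (hx : fenchelConj ψ x ≠ ∞) (z : E) :
    ⟪x, z⟫ - ψ z + ψ 0 ≤ (fenchelConj ψ x).toReal :=
  (ENNReal.ofReal_le_iff_le_toReal hx).1 (ofReal_le_fenchelConj ψ x z)

theorem youngDefect_nonneg (hx : fenchelConj ψ x ≠ ∞) (y : E) : 0 ≤ youngDefect ψ x y :=
  sub_nonneg.2 (le_toReal_fenchelConj hx y)

theorem add_inner_le_of_youngDefect_nonpos (hx : fenchelConj ψ x ≠ ∞)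
    (h : youngDefect ψ x y ≤ 0) (z : E) : ψ y + ⟪x, z - y⟫ ≤ ψ z := by
  have := le_toReal_fenchelConj hx z
  rw [youngDefect] at h
  rw [inner_sub_right]
  linarith

variable [CompleteSpace E]

theorem ConvexOn.fenchelConj_eq_of_hasGradientAt (hψ : ConvexOn ℝ Set.univ ψ)
    (h : HasGradientAt ψ g y) : fenchelConj ψ g = ENNReal.ofReal (⟪g, y⟫ - ψ y + ψ 0) := by
  refine le_antisymm (iSup_le fun z => ENNReal.ofReal_le_ofReal ?_) (ofReal_le_fenchelConj ψ g y)
  have := hψ.add_inner_le_of_hasGradientAt h z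
  rw [inner_sub_right] at this
  linarith

theorem ConvexOn.youngDefect_eq_zero_of_hasGradientAt (hψ : ConvexOn ℝ Set.univ ψ)
    (h : HasGradientAt ψ g y) : youngDefect ψ g y = 0 := by
  have hnonneg : 0 ≤ ⟪g, y⟫ - ψ y + ψ 0 := by
    have := hψ.add_inner_le_of_hasGradientAt h 0
    rw [zero_sub, inner_neg_right] at this
    linarith
  rw [youngDefect, hψ.fenchelConj_eq_of_hasGradientAt h, ENNReal.toReal_ofReal hnonneg, sub_self]

end Conjugate

section Integrability

variable {E : Type*} [NormedAddCommGroup E] [MeasurableSpace E] [BorelSpace E]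
  {ρ : Measure E}

theorem LipschitzWith.integrable_of_integrable_norm [IsFiniteMeasure ρ] {ψ : E → ℝ}
    {K : NNReal} (hψ : LipschitzWith K ψ) (hnorm : Integrable (fun y => ‖y‖) ρ) :
    Integrable ψ ρ := by
  refine ((integrable_const ‖ψ 0‖).add (hnorm.const_mul K)).mono'
    hψ.continuous.aestronglyMeasurable (Filter.Eventually.of_forall fun y => ?_)
  have := hψ.dist_le_mul y 0
  rw [dist_eq_norm, dist_zero_right] at this
  show ‖ψ y‖ ≤ ‖ψ 0‖ + K * ‖y‖
  linarith [norm_le_insert' (ψ y) (ψ 0)]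

theorem integrable_inner_self_of_ae_norm_le [InnerProductSpace ℝ E] [SecondCountableTopology E]
    {T : E → E} (hT : Measurable T) {C : ℝ} (hC : ∀ᵐ y ∂ρ, ‖T y‖ ≤ C) (hnorm : Integrable (fun y => ‖y‖) ρ) :
    Integrable (fun y => ⟪T y, y⟫) ρ := by
  refine (hnorm.const_mul C).mono' (hT.inner measurable_id).aestronglyMeasurable ?_
  filter_upwards [hC] with y hy
  exact (norm_inner_le_norm _ _).trans (by gcongr)

end Integrability

section Transport

variable {E : Type*} [NormedAddCommGroup E] [InnerProductSpace ℝ E] [CompleteSpace E]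
  [MeasurableSpace E] [BorelSpace E] {ρ : Measure E} {ψ : E → ℝ} {T₁ T₂ : E → E}

theorem ae_fenchelConj_ne_top_of_map_eq (hψ : ConvexOn ℝ Set.univ ψ) (hT₁ : Measurable T₁)
    (hT₂ : Measurable T₂) (hgrad : ∀ᵐ y ∂ρ, HasGradientAt ψ (T₁ y) y)
    (hmap : ρ.map T₁ = ρ.map T₂) : ∀ᵐ y ∂ρ, fenchelConj ψ (T₂ y) ≠ ∞ := by
  have hfin : MeasurableSet {x | fenchelConj ψ x ≠ ∞} :=
    (measurable_fenchelConj ψ (measurableSet_singleton ∞)).compl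
  rw [← ae_map_iff hT₂.aemeasurable hfin, ← hmap, ae_map_iff hT₁.aemeasurable hfin]
  filter_upwards [hgrad] with y hy
  simp [hψ.fenchelConj_eq_of_hasGradientAt hy]

theorem integral_youngDefect_of_map_eq [IsFiniteMeasure ρ] (hψ : ConvexOn ℝ Set.univ ψ)
    (hψint : Integrable ψ ρ) (hT₁ : Measurable T₁) (hT₂ : Measurable T₂)
    (hgrad : ∀ᵐ y ∂ρ, HasGradientAt ψ (T₁ y) y) (hi₁ : Integrable (fun y => ⟪T₁ y, y⟫) ρ)
    (hi₂ : Integrable (fun y => ⟪T₂ y, y⟫) ρ) (hmap : ρ.map T₁ = ρ.map T₂) :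
    Integrable (fun y => youngDefect ψ (T₂ y) y) ρ ∧
      ∫ y, youngDefect ψ (T₂ y) y ∂ρ = ∫ y, ⟪T₁ y, y⟫ ∂ρ - ∫ y, ⟪T₂ y, y⟫ ∂ρ := by
  set c : E → ℝ := fun x => (fenchelConj ψ x).toReal
  have hc : AEStronglyMeasurable c (ρ.map T₁) :=
    (measurable_fenchelConj ψ).ennreal_toReal.aestronglyMeasurable
  have hcT₁ : (fun y => c (T₁ y)) =ᵐ[ρ] fun y => ⟪T₁ y, y⟫ - ψ y + ψ 0 := by
    filter_upwards [hgrad] with y hy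
    have := hψ.youngDefect_eq_zero_of_hasGradientAt hy
    rw [youngDefect] at this
    linarith
  have hint₁ : Integrable (fun y => c (T₁ y)) ρ :=
    ((hi₁.sub hψint).add (integrable_const _)).congr hcT₁.symm
  have hint₂ : Integrable (fun y => c (T₂ y)) ρ := by
    have := (integrable_map_measure hc hT₁.aemeasurable).2 hint₁
    rw [hmap] at this hc
    exact (integrable_map_measure hc hT₂.aemeasurable).1 this
  have hinteq : ∫ y, c (T₂ y) ∂ρ = ∫ y, c (T₁ y) ∂ρ := by
    rw [← integral_map hT₂.aemeasurable (hmap ▸ hc), ← hmap,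
      integral_map hT₁.aemeasurable hc]
  have hdefect : (fun y => youngDefect ψ (T₂ y) y)
      =ᵐ[ρ] fun y => (c (T₂ y) - c (T₁ y)) + (⟪T₁ y, y⟫ - ⟪T₂ y, y⟫) := by
    filter_upwards [hcT₁] with y hy
    rw [youngDefect, hy]
    ring
  have hc₂₁ : Integrable (fun y => c (T₂ y) - c (T₁ y)) ρ := hint₂.sub hint₁
  have hi₁₂ : Integrable (fun y => ⟪T₁ y, y⟫ - ⟪T₂ y, y⟫) ρ := hi₁.sub hi₂
  refine ⟨(hc₂₁.add hi₁₂).congr hdefect.symm, ?_⟩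
  rw [integral_congr_ae hdefect, integral_add hc₂₁ hi₁₂, integral_sub hint₂ hint₁,
    integral_sub hi₁ hi₂, hinteq, sub_self, zero_add]

theorem integral_inner_le_of_map_eq [IsFiniteMeasure ρ] (hψ : ConvexOn ℝ Set.univ ψ)
    (hψint : Integrable ψ ρ) (hT₁ : Measurable T₁) (hT₂ : Measurable T₂)
    (hgrad : ∀ᵐ y ∂ρ, HasGradientAt ψ (T₁ y) y) (hi₁ : Integrable (fun y => ⟪T₁ y, y⟫) ρ)
    (hi₂ : Integrable (fun y => ⟪T₂ y, y⟫) ρ) (hmap : ρ.map T₁ = ρ.map T₂) :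
    ∫ y, ⟪T₂ y, y⟫ ∂ρ ≤ ∫ y, ⟪T₁ y, y⟫ ∂ρ := by
  have hnonneg : 0 ≤ᵐ[ρ] fun y => youngDefect ψ (T₂ y) y :=
    (ae_fenchelConj_ne_top_of_map_eq hψ hT₁ hT₂ hgrad hmap).mono fun y hy =>
      youngDefect_nonneg hy y
  linarith [integral_nonneg_of_ae hnonneg,
    (integral_youngDefect_of_map_eq hψ hψint hT₁ hT₂ hgrad hi₁ hi₂ hmap).2]

theorem ae_add_inner_le_of_map_eq [IsFiniteMeasure ρ] (hψ : ConvexOn ℝ Set.univ ψ)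
    (hψint : Integrable ψ ρ) (hT₁ : Measurable T₁) (hT₂ : Measurable T₂)
    (hgrad : ∀ᵐ y ∂ρ, HasGradientAt ψ (T₁ y) y) (hi₁ : Integrable (fun y => ⟪T₁ y, y⟫) ρ)
    (hi₂ : Integrable (fun y => ⟪T₂ y, y⟫) ρ) (hmap : ρ.map T₁ = ρ.map T₂)
    (hle : ∫ y, ⟪T₁ y, y⟫ ∂ρ ≤ ∫ y, ⟪T₂ y, y⟫ ∂ρ) :
    ∀ᵐ y ∂ρ, ∀ z, ψ y + ⟪T₂ y, z - y⟫ ≤ ψ z := by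
  obtain ⟨hint, heq⟩ := integral_youngDefect_of_map_eq hψ hψint hT₁ hT₂ hgrad hi₁ hi₂ hmap
  have hfin := ae_fenchelConj_ne_top_of_map_eq hψ hT₁ hT₂ hgrad hmap
  have hnonneg : 0 ≤ᵐ[ρ] fun y => youngDefect ψ (T₂ y) y :=
    hfin.mono fun y hy => youngDefect_nonneg hy y
  have hzero : (fun y => youngDefect ψ (T₂ y) y) =ᵐ[ρ] 0 :=
    (integral_eq_zero_iff_of_nonneg_ae hnonneg hint).1
      (by linarith [integral_nonneg_of_ae hnonneg])
  filter_upwards [hzero, hfin] with y hy hy'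
  exact add_inner_le_of_youngDefect_nonpos hy' hy.le

end Transport

theorem stmt16_general (d : ℕ) (ρ : Measure (EuclideanSpace ℝ (Fin d)))
    [IsProbabilityMeasure ρ]
    (hmom : Integrable (fun y => ‖y‖ ^ 2) ρ)
    (ψ₁ ψ₂ : EuclideanSpace ℝ (Fin d) → ℝ) (K₁ K₂ : NNReal)
    (hψ₁lip : LipschitzWith K₁ ψ₁) (hψ₂lip : LipschitzWith K₂ ψ₂)
    (hψ₁conv : ConvexOn ℝ Set.univ ψ₁) (hψ₂conv : ConvexOn ℝ Set.univ ψ₂)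
    (T₁ T₂ : EuclideanSpace ℝ (Fin d) → EuclideanSpace ℝ (Fin d))
    (hT₁meas : Measurable T₁) (hT₂meas : Measurable T₂)
    (hT₁grad : ∀ᵐ y ∂ρ, HasGradientAt ψ₁ (T₁ y) y)
    (hT₂grad : ∀ᵐ y ∂ρ, HasGradientAt ψ₂ (T₂ y) y)
    (hT₁push : Measure.map T₁ ρ
      = volume.restrict (WithLp.ofLp ⁻¹' (Set.univ.pi fun _ : Fin d => Set.Icc (0 : ℝ) 1)))
    (hT₂push : Measure.map T₂ ρ
      = volume.restrict (WithLp.ofLp ⁻¹' (Set.univ.pi fun _ : Fin d => Set.Icc (0 : ℝ) 1))) :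
    ∀ᵐ y ∂ρ, T₁ y = T₂ y := by
  have hnorm : Integrable (fun y => ‖y‖) ρ :=
    (((memLp_two_iff_integrable_sq_norm aestronglyMeasurable_id).2 hmom).integrable
      one_le_two).norm
  have hmap : ρ.map T₁ = ρ.map T₂ := hT₁push.trans hT₂push.symm
  have hi₁ := integrable_inner_self_of_ae_norm_le hT₁meas
    (hT₁grad.mono fun y hy => hy.norm_le_of_lipschitzWith hψ₁lip) hnorm
  have hi₂ := integrable_inner_self_of_ae_norm_le hT₂meas
    (hT₂grad.mono fun y hy => hy.norm_le_of_lipschitzWith hψ₂lip) hnorm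
  have hle := integral_inner_le_of_map_eq hψ₂conv (hψ₂lip.integrable_of_integrable_norm hnorm)
    hT₂meas hT₁meas hT₂grad hi₂ hi₁ hmap.symm
  have hsub := ae_add_inner_le_of_map_eq hψ₁conv (hψ₁lip.integrable_of_integrable_norm hnorm)
    hT₁meas hT₂meas hT₁grad hi₁ hi₂ hmap hle
  filter_upwards [hsub, hT₁grad] with y hy hgrad
  exact (hgrad.eq_of_forall_add_inner_le hy).symm

/-- Uniqueness part of Brenier's theorem (Theorem 1.1 of the paper): two Borel maps
that are `ρ`-a.e. gradients of Lipschitz convex functions and push `ρ` forward to the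
Lebesgue measure `λ` on the unit cube coincide `ρ`-almost everywhere. -/
theorem stmt16 (d : ℕ) (ρ : Measure (EuclideanSpace ℝ (Fin d)))
    [IsProbabilityMeasure ρ]
    (hmom : Integrable (fun y => ‖y‖ ^ 2) ρ)
    (hac : ρ ≪ volume)
    (ψ₁ ψ₂ : EuclideanSpace ℝ (Fin d) → ℝ) (K₁ K₂ : NNReal)
    (hψ₁lip : LipschitzWith K₁ ψ₁) (hψ₂lip : LipschitzWith K₂ ψ₂)
    (hψ₁conv : ConvexOn ℝ Set.univ ψ₁) (hψ₂conv : ConvexOn ℝ Set.univ ψ₂)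
    (T₁ T₂ : EuclideanSpace ℝ (Fin d) → EuclideanSpace ℝ (Fin d))
    (hT₁meas : Measurable T₁) (hT₂meas : Measurable T₂)
    (hT₁grad : ∀ᵐ y ∂ρ, HasGradientAt ψ₁ (T₁ y) y)
    (hT₂grad : ∀ᵐ y ∂ρ, HasGradientAt ψ₂ (T₂ y) y)
    (hT₁push : Measure.map T₁ ρ
      = volume.restrict (WithLp.ofLp ⁻¹' (Set.univ.pi fun _ : Fin d => Set.Icc (0 : ℝ) 1)))
    (hT₂push : Measure.map T₂ ρ
      = volume.restrict (WithLp.ofLp ⁻¹' (Set.univ.pi fun _ : Fin d => Set.Icc (0 : ℝ) 1))) :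
    ∀ᵐ y ∂ρ, T₁ y = T₂ y :=
  stmt16_general d ρ hmom ψ₁ ψ₂ K₁ K₂ hψ₁lip hψ₂lip hψ₁conv hψ₂conv T₁ T₂ hT₁meas hT₂meas hT₁grad
    hT₂grad hT₁push hT₂push
end

section
/- Let λ be the Lebesgue measure restricted to the unit cube [0,1]^d, viewed as a probability measure. Let X : [0,1]^d → ℝ^d be a Borel measurable, λ-square-integrable map such that the pushforward ρ of λ under X is absolutely continuous with respect to the Lebesgue measure on ℝ^d. Let ψ : ℝ^d → ℝ be a Lipschitz convex function and T : ℝ^d → ℝ^d a Borel map with T(y) = ∇ψ(y) for ρ-almost every y and with the pushforward of ρ under T equal to λ. Then for every Borel measure-preserving map s : [0,1]^d → [0,1]^d (i.e. the pushforward of λ under s equals λ): ∫_{[0,1]^d} |X(a) − T(X(a))|² dλ(a) ≤ ∫_{[0,1]^d} |X(a) − s(a)|² dλ(a). -/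
/-!
Expanding both squares, and using that `T ∘ X` and `s` both have law `λ` (so equal second
moments), the claim reduces to `∫ ⟪X, s⟫ ≤ ∫ ⟪X, ∇ψ(X)⟫`. By Fenchel–Young,
`⟪X, s⟫ ≤ ψ(X) + ψ*(s)`, with equality when `s` is replaced by `∇ψ(X)`, and
`∫ ψ*(s) dλ = ∫ ψ*(T ∘ X) dλ` because both maps have the same law.
-/

open MeasureTheory
open scoped RealInnerProductSpace ENNReal

theorem LipschitzWith.integrable_comp {E F α : Type*} [NormedAddCommGroup E] [NormedAddCommGroup F]
    [MeasurableSpace α] {μ : Measure α} [IsFiniteMeasure μ] {ψ : E → F} {K : NNReal}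
    (hψ : LipschitzWith K ψ) {X : α → E} (hX : Integrable X μ) :
    Integrable (fun a => ψ (X a)) μ := by
  refine ((hX.norm.const_mul K).add (integrable_const ‖ψ 0‖)).mono'
    (hψ.continuous.comp_aestronglyMeasurable hX.aestronglyMeasurable) (.of_forall fun a => ?_)
  have := hψ.dist_le_mul (X a) 0
  rw [dist_eq_norm, dist_zero_right] at this
  simp only [Pi.add_apply]
  linarith [norm_le_norm_add_norm_sub' (ψ (X a)) (ψ 0)]

theorem memLp_id_restrict_of_isCompact {E : Type*} [NormedAddCommGroup E] [MeasurableSpace E]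
    [OpensMeasurableSpace E] {μ : Measure E} [IsFiniteMeasureOnCompacts μ] {K : Set E}
    (hK : IsCompact K) (p : ℝ≥0∞) : MemLp id p (μ.restrict K) := by
  have : IsFiniteMeasure (μ.restrict K) := isFiniteMeasure_restrict.2 hK.measure_lt_top.ne
  obtain ⟨R, hR⟩ := hK.isBounded.exists_norm_le
  exact .of_bound (continuousOn_id.aestronglyMeasurable_of_isCompact hK hK.measurableSet) R
    (ae_restrict_of_forall_mem hK.measurableSet hR)

theorem isCompact_ofLp_preimage_unitCube (d : ℕ) :
    IsCompact ((WithLp.ofLp : EuclideanSpace ℝ (Fin d) → (Fin d → ℝ)) ⁻¹'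
      (Set.univ.pi fun _ : Fin d => Set.Icc (0 : ℝ) 1)) :=
  (PiLp.homeomorph 2 fun _ : Fin d => ℝ).isCompact_preimage.mpr
    (isCompact_univ_pi fun _ => isCompact_Icc)

section ConvexDuality

variable {E : Type*} [NormedAddCommGroup E] [InnerProductSpace ℝ E]
  {α : Type*} [MeasurableSpace α] {μ : Measure α}

theorem ConvexOn.add_inner_sub_le_of_hasGradientAt [CompleteSpace E] {ψ : E → ℝ}
    (hψ : ConvexOn ℝ Set.univ ψ) {g y : E} (h : HasGradientAt ψ g y) (z : E) :
    ψ y + ⟪g, z - y⟫ ≤ ψ z := by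
  have hline : ConvexOn ℝ Set.univ (ψ ∘ AffineMap.lineMap (k := ℝ) y z) := by
    simpa using hψ.comp_affineMap (AffineMap.lineMap y z)
  have hderiv : HasDerivAt (ψ ∘ AffineMap.lineMap (k := ℝ) y z) ⟪g, z - y⟫ 0 := by
    have hψ' : HasFDerivAt ψ (InnerProductSpace.toDual ℝ E g)
        (AffineMap.lineMap y z (0 : ℝ)) := by
      simpa using h.hasFDerivAt
    simpa using hψ'.comp_hasDerivAt (0 : ℝ) AffineMap.hasDerivAt_lineMap
  have hslope := hline.le_slope_of_hasDerivAt (Set.mem_univ 0) (Set.mem_univ 1) one_pos hderiv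
  simp only [slope_def_field, Function.comp_apply, AffineMap.lineMap_apply_one,
    AffineMap.lineMap_apply_zero, sub_zero, div_one] at hslope
  linarith

/-- `ψ* x + ψ 0` with values in `ℝ≥0∞`: the `y = 0` term is `0`, so truncating by `ofReal` loses
nothing, and the value `∞` is allowed (a Lipschitz `ψ` has `ψ* = ∞` outside a ball). -/
noncomputable def shiftedFenchelConj (ψ : E → ℝ) (x : E) : ℝ≥0∞ :=
  ⨆ y, ENNReal.ofReal (⟪y, x⟫ - ψ y + ψ 0)

theorem ofReal_le_shiftedFenchelConj (ψ : E → ℝ) (x y : E) :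
    ENNReal.ofReal (⟪y, x⟫ - ψ y + ψ 0) ≤ shiftedFenchelConj ψ x :=
  le_iSup (fun y => ENNReal.ofReal (⟪y, x⟫ - ψ y + ψ 0)) y

theorem shiftedFenchelConj_eq_of_subgradient {ψ : E → ℝ} {g y : E}
    (h : ∀ z, ψ y + ⟪g, z - y⟫ ≤ ψ z) :
    shiftedFenchelConj ψ g = ENNReal.ofReal (⟪y, g⟫ - ψ y + ψ 0) := by
  refine le_antisymm (iSup_le fun z => ENNReal.ofReal_le_ofReal ?_)
    (ofReal_le_shiftedFenchelConj ψ g y)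
  have := h z
  rw [inner_sub_right] at this
  rw [real_inner_comm g z, real_inner_comm g y]
  linarith

theorem measurable_shiftedFenchelConj [MeasurableSpace E] [OpensMeasurableSpace E] (ψ : E → ℝ) :
    Measurable (shiftedFenchelConj ψ) := by
  refine (lowerSemicontinuous_iSup fun y => Continuous.lowerSemicontinuous ?_).measurable
  exact ENNReal.continuous_ofReal.comp (by fun_prop)

theorem MeasureTheory.MemLp.integrable_inner {f g : α → E} (hf : MemLp f 2 μ) (hg : MemLp g 2 μ) :
    Integrable (fun a => ⟪f a, g a⟫) μ :=
  (L2.integrable_inner (𝕜 := ℝ) hf.toLp hg.toLp).congr <| by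
    filter_upwards [hf.coeFn_toLp, hg.coeFn_toLp] with a hfa hga
    rw [hfa, hga]

theorem integral_norm_sub_sq {f g : α → E} (hf : MemLp f 2 μ) (hg : MemLp g 2 μ) :
    ∫ a, ‖f a - g a‖ ^ 2 ∂μ =
      ∫ a, ‖f a‖ ^ 2 ∂μ - 2 * ∫ a, ⟪f a, g a⟫ ∂μ + ∫ a, ‖g a‖ ^ 2 ∂μ := by
  have hf2 := hf.integrable_norm_pow two_ne_zero
  have hfg := (hf.integrable_inner hg).const_mul 2
  have hf2fg : Integrable (fun a => ‖f a‖ ^ 2 - 2 * ⟪f a, g a⟫) μ := hf2.sub hfg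
  simp_rw [norm_sub_sq_real]
  rw [integral_add hf2fg (hg.integrable_norm_pow two_ne_zero), integral_sub hf2 hfg,
    integral_const_mul]

theorem integral_inner_le_of_subgradient [IsFiniteMeasure μ] [MeasurableSpace E]
    [OpensMeasurableSpace E] {ψ : E → ℝ} {X Y s : α → E}
    (hY : Measurable Y) (hs : Measurable s) (hlaw : μ.map Y = μ.map s)
    (hsub : ∀ᵐ a ∂μ, ∀ z, ψ (X a) + ⟪Y a, z - X a⟫ ≤ ψ z)
    (hψX : Integrable (fun a => ψ (X a)) μ) (hXY : Integrable (fun a => ⟪X a, Y a⟫) μ)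
    (hXs : Integrable (fun a => ⟪X a, s a⟫) μ) :
    ∫ a, ⟪X a, s a⟫ ∂μ ≤ ∫ a, ⟪X a, Y a⟫ ∂μ := by
  set F : α → ℝ := fun a => ⟪X a, Y a⟫ - ψ (X a) + ψ 0
  set G : α → ℝ := fun a => ⟪X a, s a⟫ - ψ (X a) + ψ 0
  have hF : Integrable F μ := (hXY.sub hψX).add (integrable_const _)
  have hG : Integrable G μ := (hXs.sub hψX).add (integrable_const _)
  have hF_nonneg : 0 ≤ᵐ[μ] F := by
    filter_upwards [hsub] with a ha
    have := ha 0
    rw [zero_sub, inner_neg_right, real_inner_comm] at this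
    simp only [F, Pi.zero_apply]
    linarith
  have hconj : ∫⁻ a, shiftedFenchelConj ψ (s a) ∂μ = ENNReal.ofReal (∫ a, F a ∂μ) := by
    have hmeas := measurable_shiftedFenchelConj (E := E) ψ
    calc ∫⁻ a, shiftedFenchelConj ψ (s a) ∂μ
        = ∫⁻ x, shiftedFenchelConj ψ x ∂(μ.map s) := (lintegral_map hmeas hs).symm
      _ = ∫⁻ a, shiftedFenchelConj ψ (Y a) ∂μ := by rw [← hlaw, lintegral_map hmeas hY]
      _ = ∫⁻ a, ENNReal.ofReal (F a) ∂μ :=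
        lintegral_congr_ae (hsub.mono fun a ha => shiftedFenchelConj_eq_of_subgradient ha)
      _ = ENNReal.ofReal (∫ a, F a ∂μ) := (ofReal_integral_eq_lintegral_ofReal hF hF_nonneg).symm
  have hGF : ∫ a, G a ∂μ ≤ ∫ a, F a ∂μ :=
    calc ∫ a, G a ∂μ ≤ (∫⁻ a, ENNReal.ofReal (G a) ∂μ).toReal := by
          rw [integral_eq_lintegral_pos_part_sub_lintegral_neg_part hG]
          exact sub_le_self _ ENNReal.toReal_nonneg
      _ ≤ (∫⁻ a, shiftedFenchelConj ψ (s a) ∂μ).toReal :=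
          ENNReal.toReal_mono (hconj ▸ ENNReal.ofReal_ne_top)
            (lintegral_mono fun a => ofReal_le_shiftedFenchelConj ψ (s a) (X a))
      _ = ∫ a, F a ∂μ := by rw [hconj, ENNReal.toReal_ofReal (integral_nonneg_of_ae hF_nonneg)]
  have hdiff : ∫ a, ⟪X a, s a⟫ ∂μ - ∫ a, ⟪X a, Y a⟫ ∂μ = ∫ a, G a ∂μ - ∫ a, F a ∂μ := by
    rw [← integral_sub hXs hXY, ← integral_sub hG hF]
    congr 1 with a
    simp only [F, G]
    ring
  linarith

end ConvexDuality

theorem stmt17_general (d : ℕ)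
    (cube : Set (EuclideanSpace ℝ (Fin d)))
    (hcube : cube = (WithLp.ofLp : EuclideanSpace ℝ (Fin d) → (Fin d → ℝ)) ⁻¹'
      (Set.univ.pi fun _ : Fin d => Set.Icc (0 : ℝ) 1))
    (lam : Measure (EuclideanSpace ℝ (Fin d))) (hlam : lam = volume.restrict cube)
    (X : EuclideanSpace ℝ (Fin d) → EuclideanSpace ℝ (Fin d))
    (hXmeas : Measurable X) (hX2 : MemLp X 2 lam)
    (ρ : Measure (EuclideanSpace ℝ (Fin d))) (hρ : ρ = Measure.map X lam)
    (ψ : EuclideanSpace ℝ (Fin d) → ℝ) (K : NNReal)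
    (hψlip : LipschitzWith K ψ) (hψconv : ConvexOn ℝ Set.univ ψ)
    (T : EuclideanSpace ℝ (Fin d) → EuclideanSpace ℝ (Fin d))
    (hTmeas : Measurable T)
    (hTgrad : ∀ᵐ y ∂ρ, HasGradientAt ψ (T y) y)
    (hTpush : Measure.map T ρ = lam)
    (s : EuclideanSpace ℝ (Fin d) → EuclideanSpace ℝ (Fin d))
    (hsmeas : Measurable s)
    (hspush : Measure.map s lam = lam) :
    ∫ a, ‖X a - T (X a)‖ ^ 2 ∂lam ≤ ∫ a, ‖X a - s a‖ ^ 2 ∂lam := by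
  have hcube_cpt : IsCompact cube := hcube ▸ isCompact_ofLp_preimage_unitCube d
  have : IsFiniteMeasure lam := hlam ▸ isFiniteMeasure_restrict.2 hcube_cpt.measure_lt_top.ne
  have hid : MemLp id 2 lam := hlam ▸ memLp_id_restrict_of_isCompact hcube_cpt 2
  have hTXmeas : Measurable fun a => T (X a) := hTmeas.comp hXmeas
  have hTX_law : lam.map (fun a => T (X a)) = lam :=
    (Measure.map_map hTmeas hXmeas).symm.trans (hρ ▸ hTpush)
  have hTX2 : MemLp (fun a => T (X a)) 2 lam := (hTX_law ▸ hid).comp_of_map hTXmeas.aemeasurable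
  have hs2 : MemLp s 2 lam := (hspush ▸ hid).comp_of_map hsmeas.aemeasurable
  have hsub : ∀ᵐ a ∂lam, ∀ z, ψ (X a) + ⟪T (X a), z - X a⟫ ≤ ψ z := by
    rw [hρ] at hTgrad
    filter_upwards [ae_of_ae_map hXmeas.aemeasurable hTgrad] with a ha
    exact hψconv.add_inner_sub_le_of_hasGradientAt ha
  have hinner : ∫ a, ⟪X a, s a⟫ ∂lam ≤ ∫ a, ⟪X a, T (X a)⟫ ∂lam :=
    integral_inner_le_of_subgradient hTXmeas hsmeas (hTX_law.trans hspush.symm) hsub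
      (hψlip.integrable_comp (hX2.integrable one_le_two)) (hX2.integrable_inner hTX2)
      (hX2.integrable_inner hs2)
  have hmoment : ∫ a, ‖T (X a)‖ ^ 2 ∂lam = ∫ a, ‖s a‖ ^ 2 ∂lam := by
    have hsq : Continuous fun x : EuclideanSpace ℝ (Fin d) => ‖x‖ ^ 2 := by fun_prop
    calc ∫ a, ‖T (X a)‖ ^ 2 ∂lam = ∫ x, ‖x‖ ^ 2 ∂(lam.map fun a => T (X a)) :=
          (integral_map hTXmeas.aemeasurable hsq.aestronglyMeasurable).symm
      _ = ∫ x, ‖x‖ ^ 2 ∂(lam.map s) := by rw [hTX_law, hspush]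
      _ = ∫ a, ‖s a‖ ^ 2 ∂lam := integral_map hsmeas.aemeasurable hsq.aestronglyMeasurable
  rw [integral_norm_sub_sq hX2 hTX2, integral_norm_sub_sq hX2 hs2, hmoment]
  linarith

/-- Closest-point assertion of Brenier's polar factorization (Theorem 1.1): for a
nondegenerate square-integrable map `X` on the unit cube, the composition `T ∘ X`
(where `T = ∇ψ` pushes `ρ = X#λ` back to `λ`) is the closest point to `X` among all
measure-preserving maps `s` of the unit cube. -/
theorem stmt17 (d : ℕ)
    (cube : Set (EuclideanSpace ℝ (Fin d)))
    (hcube : cube = (WithLp.ofLp : EuclideanSpace ℝ (Fin d) → (Fin d → ℝ)) ⁻¹'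
      (Set.univ.pi fun _ : Fin d => Set.Icc (0 : ℝ) 1))
    (lam : Measure (EuclideanSpace ℝ (Fin d))) (hlam : lam = volume.restrict cube)
    (X : EuclideanSpace ℝ (Fin d) → EuclideanSpace ℝ (Fin d))
    (hXmeas : Measurable X) (hX2 : MemLp X 2 lam)
    (ρ : Measure (EuclideanSpace ℝ (Fin d))) (hρ : ρ = Measure.map X lam)
    (hac : ρ ≪ volume)
    (ψ : EuclideanSpace ℝ (Fin d) → ℝ) (K : NNReal)
    (hψlip : LipschitzWith K ψ) (hψconv : ConvexOn ℝ Set.univ ψ)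
    (T : EuclideanSpace ℝ (Fin d) → EuclideanSpace ℝ (Fin d))
    (hTmeas : Measurable T)
    (hTgrad : ∀ᵐ y ∂ρ, HasGradientAt ψ (T y) y)
    (hTpush : Measure.map T ρ = lam)
    (s : EuclideanSpace ℝ (Fin d) → EuclideanSpace ℝ (Fin d))
    (hsmeas : Measurable s) (hsrange : ∀ a, s a ∈ cube)
    (hspush : Measure.map s lam = lam) :
    ∫ a, ‖X a - T (X a)‖ ^ 2 ∂lam ≤ ∫ a, ‖X a - s a‖ ^ 2 ∂lam :=
  stmt17_general d cube hcube lam hlam X hXmeas hX2 ρ hρ ψ K hψlip hψconv T hTmeas hTgrad hTpush s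
    hsmeas hspush
end

section
/- Let E be a finite-dimensional real inner product space, S ⊆ E a nonempty finite set, and Φ(Y) = (1/2)·dist(Y,S)². Let θ₀ < θ₁ and let X : [θ₀,θ₁] → E be twice continuously differentiable. Assume Φ is differentiable at X(θ) for every θ ∈ [θ₀,θ₁], that θ ↦ ∇Φ(X(θ)) is continuous, and that X minimizes the action A(Y) = ∫_{θ₀}^{θ₁} ( (1/2)·‖Y'(θ)‖² + Φ(Y(θ)) ) dθ among all continuously differentiable curves Y : [θ₀,θ₁] → E with Y(θ₀) = X(θ₀) and Y(θ₁) = X(θ₁). Then X''(θ) = ∇Φ(X(θ)) = X(θ) − s*(θ) for every θ ∈ (θ₀,θ₁), where s*(θ) denotes the unique nearest point of X(θ) in S. -/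
/-!
The potential `Φ = ½ dist(·, S)²` lies below every paraboloid `½‖· - s‖²` with `s ∈ S`, and touches
it at the points having `s` as a nearest point. Where `Φ` is differentiable this forces
`∇Φ(Y) = Y - s` for every nearest point `s` (so that point is unique), and gives the one-sided
bound `Φ Z ≤ Φ Y + ⟪∇Φ Y, Z - Y⟫ + ½‖Z - Y‖²`. Along the minimizer `X` this bound shows that the
action of `X + εζ` is at most `A(X) + εL + ε²Q`, so the first variation
`L = ∫ ⟪X', ζ'⟫ + ⟪∇Φ(X), ζ⟫` vanishes for every variation `ζ`. The du Bois-Reymond lemma turns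
this weak Euler–Lagrange equation into `X'' = ∇Φ(X)` on the open interval.
-/

open Set Filter Topology MeasureTheory intervalIntegral Metric
open scoped RealInnerProductSpace

section NearestPoint

variable {E : Type*} [NormedAddCommGroup E]

theorem infDist_sq_le_norm_sub_sq {S : Set E} {s : E} (hs : s ∈ S) (z : E) :
    infDist z S ^ 2 ≤ ‖z - s‖ ^ 2 := by
  rw [← dist_eq_norm]
  exact pow_le_pow_left₀ infDist_nonneg (infDist_le_dist_of_mem hs) 2

variable [InnerProductSpace ℝ E]

theorem hasGradientAt_norm_sub_sq_div_two [CompleteSpace E] (s y : E) :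
    HasGradientAt (fun z => ‖z - s‖ ^ 2 / 2) (y - s) y := by
  rw [hasGradientAt_iff_hasFDerivAt]
  have h := ((hasFDerivAt_id y).sub_const s).norm_sq.mul_const (2⁻¹ : ℝ)
  simp only [id, ← div_eq_mul_inv] at h
  refine h.congr_fderiv ?_
  ext v
  simp

theorem gradient_eq_of_eventually_le_of_eq [CompleteSpace E] {f q : E → ℝ} {x g : E}
    (hf : DifferentiableAt ℝ f x) (hq : HasGradientAt q g x) (hle : ∀ᶠ z in 𝓝 x, f z ≤ q z)
    (heq : f x = q x) : gradient f x = g := by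
  have hmin : IsLocalMin (fun z => q z - f z) x := by
    filter_upwards [hle] with z hz
    rw [heq, sub_self]
    exact sub_nonneg.mpr hz
  have h0 := hmin.hasFDerivAt_eq_zero
    ((hasGradientAt_iff_hasFDerivAt.mp hq).sub (hasGradientAt_iff_hasFDerivAt.mp hf.hasGradientAt))
  exact ((InnerProductSpace.toDual ℝ E).injective (sub_eq_zero.mp h0)).symm

theorem infDist_sq_div_two_le {S : Set E} {y s : E} (hs : s ∈ S)
    (hnear : ‖y - s‖ = infDist y S) (z : E) :
    infDist z S ^ 2 / 2 ≤ infDist y S ^ 2 / 2 + ⟪y - s, z - y⟫ + 1 / 2 * ‖z - y‖ ^ 2 := by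
  have h := infDist_sq_le_norm_sub_sq hs z
  rw [show z - s = (y - s) + (z - y) by abel, norm_add_sq_real, hnear] at h
  linarith

theorem gradient_infDist_sq_div_two [CompleteSpace E] {S : Set E} {y s : E} (hs : s ∈ S)
    (hnear : ‖y - s‖ = infDist y S)
    (hd : DifferentiableAt ℝ (fun z => infDist z S ^ 2 / 2) y) :
    gradient (fun z => infDist z S ^ 2 / 2) y = y - s :=
  gradient_eq_of_eventually_le_of_eq hd (hasGradientAt_norm_sub_sq_div_two s y)
    (Eventually.of_forall fun z => by linarith [infDist_sq_le_norm_sub_sq hs z])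
    (by rw [hnear])

end NearestPoint

section FirstVariation

variable {E : Type*} [NormedAddCommGroup E] [InnerProductSpace ℝ E]

noncomputable def action (a b : ℝ) (V : E → ℝ) (Y Y' : ℝ → E) : ℝ :=
  ∫ t in a..b, (‖Y' t‖ ^ 2 / 2 + V (Y t))

variable {a b C : ℝ} {V : E → ℝ} {X X' g ζ ζ' : ℝ → E}

theorem action_add_smul_le (hab : a ≤ b) (hV : Continuous V) (hX : ContinuousOn X (Icc a b))
    (hX' : ContinuousOn X' (Icc a b)) (hg : ContinuousOn g (Icc a b))
    (hζ : ContinuousOn ζ (Icc a b)) (hζ' : ContinuousOn ζ' (Icc a b))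
    (hV_le : ∀ t ∈ Icc a b, ∀ z, V z ≤ V (X t) + ⟪g t, z - X t⟫ + C * ‖z - X t‖ ^ 2) (ε : ℝ) :
    action a b V (fun t => X t + ε • ζ t) (fun t => X' t + ε • ζ' t) ≤
      action a b V X X' + ε * (∫ t in a..b, (⟪X' t, ζ' t⟫ + ⟪g t, ζ t⟫))
        + ε ^ 2 * ∫ t in a..b, (‖ζ' t‖ ^ 2 / 2 + C * ‖ζ t‖ ^ 2) := by
  have integrable {f : ℝ → ℝ} (hf : ContinuousOn f (Icc a b)) : IntervalIntegrable f volume a b :=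
    hf.intervalIntegrable_of_Icc hab
  have hX₀ : IntervalIntegrable (fun t => ‖X' t‖ ^ 2 / 2 + V (X t)) volume a b :=
    integrable (((hX'.norm.pow 2).div_const 2).add (hV.comp_continuousOn hX))
  have hL : IntervalIntegrable (fun t => ⟪X' t, ζ' t⟫ + ⟪g t, ζ t⟫) volume a b :=
    integrable ((hX'.inner hζ').add (hg.inner hζ))
  have hQ : IntervalIntegrable (fun t => ‖ζ' t‖ ^ 2 / 2 + C * ‖ζ t‖ ^ 2) volume a b :=
    integrable (((hζ'.norm.pow 2).div_const 2).add (continuousOn_const.mul (hζ.norm.pow 2)))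
  rw [action, action, ← intervalIntegral.integral_const_mul, ← intervalIntegral.integral_const_mul,
    ← integral_add hX₀ (hL.const_mul ε),
    ← integral_add (hX₀.add (hL.const_mul ε)) (hQ.const_mul _)]
  refine integral_mono_on hab ?_ ?_ fun t ht => ?_
  · exact integrable ((((hX'.add (hζ'.const_smul ε)).norm.pow 2).div_const 2).add
      (hV.comp_continuousOn (hX.add (hζ.const_smul ε))))
  · exact (hX₀.add (hL.const_mul ε)).add (hQ.const_mul _)
  have hV_t := hV_le t ht (X t + ε • ζ t)
  simp only [add_sub_cancel_left, inner_smul_right, norm_smul, Real.norm_eq_abs, mul_pow,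
    sq_abs] at hV_t
  simp only [norm_add_sq_real, inner_smul_right, norm_smul, Real.norm_eq_abs, mul_pow, sq_abs]
  nlinarith [hV_t]

theorem integral_inner_add_inner_eq_zero_of_minimizer (hab : a ≤ b) (hV : Continuous V)
    (hX : ∀ t ∈ Icc a b, HasDerivAt X (X' t) t) (hX' : ContinuousOn X' (Icc a b))
    (hg : ContinuousOn g (Icc a b))
    (hV_le : ∀ t ∈ Icc a b, ∀ z, V z ≤ V (X t) + ⟪g t, z - X t⟫ + C * ‖z - X t‖ ^ 2)
    (hmin : ∀ Y Y' : ℝ → E, (∀ t ∈ Icc a b, HasDerivAt Y (Y' t) t) → ContinuousOn Y' (Icc a b) →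
      Y a = X a → Y b = X b → action a b V X X' ≤ action a b V Y Y')
    (hζ : ∀ t ∈ Icc a b, HasDerivAt ζ (ζ' t) t) (hζ' : ContinuousOn ζ' (Icc a b))
    (ha : ζ a = 0) (hb : ζ b = 0) :
    ∫ t in a..b, (⟪X' t, ζ' t⟫ + ⟪g t, ζ t⟫) = 0 := by
  set L := ∫ t in a..b, (⟪X' t, ζ' t⟫ + ⟪g t, ζ t⟫)
  set Q := ∫ t in a..b, (‖ζ' t‖ ^ 2 / 2 + C * ‖ζ t‖ ^ 2)
  have hvar (ε : ℝ) : 0 ≤ Q * (ε * ε) + L * ε + 0 := by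
    have hle := (hmin _ _ (fun t ht => (hX t ht).add ((hζ t ht).const_smul ε))
      (hX'.add (hζ'.const_smul ε)) (by simp [ha]) (by simp [hb])).trans
      (action_add_smul_le hab hV (HasDerivAt.continuousOn hX) hX' hg
        (HasDerivAt.continuousOn hζ) hζ' hV_le ε)
    linarith
  have hdisc := discrim_le_zero hvar
  rw [discrim] at hdisc
  nlinarith [sq_nonneg L]

end FirstVariation

section DuBoisReymond

variable {E : Type*} [NormedAddCommGroup E] [InnerProductSpace ℝ E] [CompleteSpace E]
  {a b : ℝ} {F g : ℝ → E}

theorem exists_eqOn_add_primitive_of_integral_inner_eq_zero (hab : a < b) (hF : Continuous F)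
    (hg : Continuous g)
    (h : ∀ ζ ζ' : ℝ → E, (∀ t, HasDerivAt ζ (ζ' t) t) → Continuous ζ' → ζ a = 0 → ζ b = 0 →
      ∫ t in a..b, (⟪F t, ζ' t⟫ + ⟪g t, ζ t⟫) = 0) :
    ∃ c : E, EqOn F (fun t => c + ∫ s in a..t, g s) (Icc a b) := by
  set c : E := (b - a)⁻¹ • ∫ t in a..b, (F t - ∫ s in a..t, g s)
  set P : ℝ → E := fun t => c + ∫ s in a..t, g s
  have hG : Continuous fun t => ∫ s in a..t, g s := continuous_primitive hg.intervalIntegrable a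
  have hP (t : ℝ) : HasDerivAt P (g t) t :=
    (hg.integral_hasStrictDerivAt a t).hasDerivAt.const_add c
  have hPc : Continuous P := continuous_const.add hG
  -- `η` is a primitive of `F - P`, and the choice of `c` makes `η b = 0`
  set η : ℝ → E := fun t => ∫ s in a..t, (F s - P s)
  have hη (t : ℝ) : HasDerivAt η (F t - P t) t :=
    ((hF.sub hPc).integral_hasStrictDerivAt a t).hasDerivAt
  have hηa : η a = 0 := integral_same
  have hηb : η b = 0 := by
    have hFG : IntervalIntegrable (fun t => F t - ∫ s in a..t, g s) volume a b :=
      (hF.sub hG).intervalIntegrable a b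
    simp only [η, P, sub_add_eq_sub_sub_swap]
    rw [integral_sub hFG intervalIntegrable_const, intervalIntegral.integral_const, smul_smul,
      mul_inv_cancel₀ (sub_ne_zero.mpr hab.ne'), one_smul, sub_self]
  have hηc : Continuous η := continuous_iff_continuousAt.mpr fun t => (hη t).continuousAt
  have hparts : ∫ t in a..b, (⟪P t, F t - P t⟫ + ⟪g t, η t⟫) = 0 := by
    rw [integral_eq_sub_of_hasDerivAt (fun t _ => (hP t).inner ℝ (hη t))
      (((hPc.inner (hF.sub hPc)).add (hg.inner hηc)).intervalIntegrable a b)]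
    simp [hηa, hηb]
  have hsq : ∫ t in a..b, ‖F t - P t‖ ^ 2 = 0 := calc
    _ = (∫ t in a..b, (⟪F t, F t - P t⟫ + ⟪g t, η t⟫))
          - ∫ t in a..b, (⟪P t, F t - P t⟫ + ⟪g t, η t⟫) := by
      rw [← integral_sub (((hF.inner (hF.sub hPc)).add (hg.inner hηc)).intervalIntegrable a b)
        (((hPc.inner (hF.sub hPc)).add (hg.inner hηc)).intervalIntegrable a b)]
      simp only [add_sub_add_right_eq_sub, ← inner_sub_left, real_inner_self_eq_norm_sq]
    _ = 0 := by rw [h η _ hη (hF.sub hPc) hηa hηb, hparts, sub_zero]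
  refine ⟨c, fun t ht => ?_⟩
  by_contra hne
  have hpos := integral_lt_integral_of_continuousOn_of_le_of_exists_lt hab continuousOn_const
    ((hF.sub hPc).norm.pow 2).continuousOn (fun _ _ => sq_nonneg _)
    ⟨t, ht, pow_pos (norm_pos_iff.mpr (sub_ne_zero.mpr hne)) 2⟩
  simp [hsq] at hpos

theorem hasDerivAt_of_forall_integral_inner_eq_zero (hab : a < b) (hF : ContinuousOn F (Icc a b))
    (hg : ContinuousOn g (Icc a b))
    (h : ∀ ζ ζ' : ℝ → E, (∀ t, HasDerivAt ζ (ζ' t) t) → Continuous ζ' → ζ a = 0 → ζ b = 0 →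
      ∫ t in a..b, (⟪F t, ζ' t⟫ + ⟪g t, ζ t⟫) = 0) :
    ∀ t ∈ Ioo a b, HasDerivAt F (g t) t := by
  set Fext := IccExtend hab.le ((Icc a b).domRestrict F)
  set gext := IccExtend hab.le ((Icc a b).domRestrict g)
  have hFext : Continuous Fext := hF.domRestrict.Icc_extend'
  have hgext : Continuous gext := hg.domRestrict.Icc_extend'
  have hFF : EqOn Fext F (Icc a b) := fun t ht => IccExtend_of_mem _ _ ht
  have hgg : EqOn gext g (Icc a b) := fun t ht => IccExtend_of_mem _ _ ht
  obtain ⟨c, hc⟩ := exists_eqOn_add_primitive_of_integral_inner_eq_zero hab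
    hFext hgext fun ζ ζ' hζ hζ' ha hb => by
      rw [← h ζ ζ' hζ hζ' ha hb]
      refine integral_congr fun t ht => ?_
      rw [uIcc_of_le hab.le] at ht
      simp only [hFF ht, hgg ht]
  intro t ht
  rw [← hgg (Ioo_subset_Icc_self ht)]
  refine ((hgext.integral_hasStrictDerivAt a t).hasDerivAt.const_add c).congr_of_eventuallyEq ?_
  filter_upwards [Ioo_mem_nhds ht.1 ht.2] with u hu
  rw [← hFF (Ioo_subset_Icc_self hu), hc (Ioo_subset_Icc_self hu)]

end DuBoisReymond

theorem stmt18_general {E : Type*} [NormedAddCommGroup E] [InnerProductSpace ℝ E]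
    [FiniteDimensional ℝ E]
    (S : Finset E) (hS : S.Nonempty)
    (Φ : E → ℝ) (hΦ : ∀ Y : E, Φ Y = Metric.infDist Y (S : Set E) ^ 2 / 2)
    (θ₀ θ₁ : ℝ) (hθ : θ₀ < θ₁)
    (X X' X'' : ℝ → E)
    (hX : ∀ θ ∈ Set.Icc θ₀ θ₁, HasDerivAt X (X' θ) θ)
    (hX' : ∀ θ ∈ Set.Icc θ₀ θ₁, HasDerivAt X' (X'' θ) θ)
    (hdiff : ∀ θ ∈ Set.Icc θ₀ θ₁, DifferentiableAt ℝ Φ (X θ))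
    (hgrad : ContinuousOn (fun θ => gradient Φ (X θ)) (Set.Icc θ₀ θ₁))
    (hmin : ∀ (Y Y' : ℝ → E),
      (∀ θ ∈ Set.Icc θ₀ θ₁, HasDerivAt Y (Y' θ) θ) →
      ContinuousOn Y' (Set.Icc θ₀ θ₁) →
      Y θ₀ = X θ₀ → Y θ₁ = X θ₁ →
      (∫ θ in θ₀..θ₁, (‖X' θ‖ ^ 2 / 2 + Φ (X θ)))
        ≤ ∫ θ in θ₀..θ₁, (‖Y' θ‖ ^ 2 / 2 + Φ (Y θ))) :
    ∀ θ ∈ Set.Ioo θ₀ θ₁,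
      X'' θ = gradient Φ (X θ)
      ∧ ∃ sstar ∈ S,
          ‖X θ - sstar‖ = Metric.infDist (X θ) (S : Set E)
          ∧ (∀ s ∈ S, ‖X θ - s‖ = Metric.infDist (X θ) (S : Set E) → s = sstar)
          ∧ X'' θ = X θ - sstar := by
  obtain rfl : Φ = fun Y => infDist Y (S : Set E) ^ 2 / 2 := funext hΦ
  have hnearest (Y : E) : ∃ s ∈ S, ‖Y - s‖ = infDist Y (S : Set E) := by
    obtain ⟨s, hs, h⟩ :=
      S.finite_toSet.isCompact.exists_infDist_eq_dist (Finset.coe_nonempty.mpr hS) Y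
    exact ⟨s, hs, by rw [← dist_eq_norm, h]⟩
  have hgrad_eq : ∀ θ ∈ Icc θ₀ θ₁, ∀ s ∈ S, ‖X θ - s‖ = infDist (X θ) (S : Set E) →
      gradient (fun Y => infDist Y (S : Set E) ^ 2 / 2) (X θ) = X θ - s :=
    fun θ hθ s hs hnear => gradient_infDist_sq_div_two (Finset.mem_coe.mpr hs) hnear (hdiff θ hθ)
  have hbound : ∀ θ ∈ Icc θ₀ θ₁, ∀ Z, infDist Z (S : Set E) ^ 2 / 2 ≤
      infDist (X θ) (S : Set E) ^ 2 / 2 +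
        ⟪gradient (fun Y => infDist Y (S : Set E) ^ 2 / 2) (X θ), Z - X θ⟫ +
        1 / 2 * ‖Z - X θ‖ ^ 2 := by
    intro θ hθ Z
    obtain ⟨s, hs, hnear⟩ := hnearest (X θ)
    rw [hgrad_eq θ hθ s hs hnear]
    exact infDist_sq_div_two_le (Finset.mem_coe.mpr hs) hnear Z
  have hX'c : ContinuousOn X' (Icc θ₀ θ₁) := HasDerivAt.continuousOn hX'
  have hX''_eq (θ : ℝ) (hθ' : θ ∈ Ioo θ₀ θ₁) : X'' θ = gradient _ (X θ) :=
    (hX' θ (Ioo_subset_Icc_self hθ')).unique <|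
      hasDerivAt_of_forall_integral_inner_eq_zero hθ hX'c hgrad
        (fun ζ ζ' hζ hζ' ha hb => integral_inner_add_inner_eq_zero_of_minimizer hθ.le
          ((continuous_infDist_pt _).pow 2 |>.div_const 2) hX hX'c hgrad hbound hmin
          (fun t _ => hζ t) hζ'.continuousOn ha hb) θ hθ'
  intro θ hθ'
  obtain ⟨s, hs, hnear⟩ := hnearest (X θ)
  have hs_eq := hgrad_eq θ (Ioo_subset_Icc_self hθ') s hs hnear
  refine ⟨hX''_eq θ hθ', s, hs, hnear, fun s' hs' hnear' => ?_, by rw [hX''_eq θ hθ', hs_eq]⟩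
  simpa [hs_eq, eq_comm] using hgrad_eq θ (Ioo_subset_Icc_self hθ') s' hs' hnear'

/-- Optimality equation for the least action principle obtained from the second
application of the large deviation principle: a `C²` minimizer of the action
`∫ (½‖X'‖² + Φ(X))` with `Φ = ½ dist(·,S)²`, along which `Φ` is differentiable with
continuous gradient, satisfies `X'' = ∇Φ(X) = X − π(X)` in the interior, where
`π(X(θ))` is the unique nearest point of `X(θ)` in `S`. -/
theorem stmt18 {E : Type*} [NormedAddCommGroup E] [InnerProductSpace ℝ E]
    [FiniteDimensional ℝ E]
    (S : Finset E) (hS : S.Nonempty)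
    (Φ : E → ℝ) (hΦ : ∀ Y : E, Φ Y = Metric.infDist Y (S : Set E) ^ 2 / 2)
    (θ₀ θ₁ : ℝ) (hθ : θ₀ < θ₁)
    (X X' X'' : ℝ → E)
    (hX : ∀ θ ∈ Set.Icc θ₀ θ₁, HasDerivAt X (X' θ) θ)
    (hX' : ∀ θ ∈ Set.Icc θ₀ θ₁, HasDerivAt X' (X'' θ) θ)
    (hX'' : ContinuousOn X'' (Set.Icc θ₀ θ₁))
    (hdiff : ∀ θ ∈ Set.Icc θ₀ θ₁, DifferentiableAt ℝ Φ (X θ))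
    (hgrad : ContinuousOn (fun θ => gradient Φ (X θ)) (Set.Icc θ₀ θ₁))
    (hmin : ∀ (Y Y' : ℝ → E),
      (∀ θ ∈ Set.Icc θ₀ θ₁, HasDerivAt Y (Y' θ) θ) →
      ContinuousOn Y' (Set.Icc θ₀ θ₁) →
      Y θ₀ = X θ₀ → Y θ₁ = X θ₁ →
      (∫ θ in θ₀..θ₁, (‖X' θ‖ ^ 2 / 2 + Φ (X θ)))
        ≤ ∫ θ in θ₀..θ₁, (‖Y' θ‖ ^ 2 / 2 + Φ (Y θ))) :
    ∀ θ ∈ Set.Ioo θ₀ θ₁,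
      X'' θ = gradient Φ (X θ)
      ∧ ∃ sstar ∈ S,
          ‖X θ - sstar‖ = Metric.infDist (X θ) (S : Set E)
          ∧ (∀ s ∈ S, ‖X θ - s‖ = Metric.infDist (X θ) (S : Set E) → s = sstar)
          ∧ X'' θ = X θ - sstar :=
  stmt18_general S hS Φ hΦ θ₀ θ₁ hθ X X' X'' hX hX' hdiff hgrad hmin
end
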